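/- arXiv:1105.2407 — 3 statements merged into one kernel-verified Lean document; each statement's English description precedes it below -/
import Mathlib

section
/- Fix α > 0 and y ∈ V. For every sequence (y_k) in V converging in norm to y, and every sequence (u_k) in U such that u_k is a minimizer of T_{α,y_k} for each k, the sequence (u_k) has a weakly convergent subsequence, and every weak limit point of (u_k) is a minimizer of T_{α,y}. -/
/-!
Minimality against a fixed `u₀` with `R u₀ < ∞` bounds `T_{α,y_k}(u_k)`, hence the residuals
`‖F u_k - y_k‖`, hence `T_{α,y}(u_k) ≤ T_{α,y_k}(u_k) + o(1)` as `y_k → y`. Bounded sublevel sets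
then make `(u_k)` bounded, and a bounded sequence in a Hilbert space has a weakly convergent
subsequence (sequential Banach–Alaoglu on its separable closed span, via the Riesz map). At a weak
limit point `x`, weak lower semicontinuity of `‖F · - y‖²` and of `R` gives
`T_{α,y}(x) ≤ liminf T_{α,y}(u_k) ≤ lim (T_{α,y_k}(w) + o(1)) = T_{α,y}(w)`.
-/

open Filter Topology ENNReal

/-- Weak convergence of a sequence in a real inner product space. -/
def WeakConv {U : Type*} [NormedAddCommGroup U] [InnerProductSpace ℝ U]
    (u : ℕ → U) (x : U) : Prop :=
  ∀ w : U, Tendsto (fun k => (inner ℝ w (u k) : ℝ)) atTop (nhds (inner ℝ w x : ℝ))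

/-- The Tikhonov functional `T_{α,y}(u) = (1/2)‖F u − y‖² + α R(u)`. -/
noncomputable def Tik {U V : Type*} [NormedAddCommGroup U] [InnerProductSpace ℝ U]
    [NormedAddCommGroup V] [InnerProductSpace ℝ V]
    (F : U →L[ℝ] V) (R : U → ℝ≥0∞) (α : ℝ) (y : V) (u : U) : ℝ≥0∞ :=
  ENNReal.ofReal (2⁻¹ * ‖F u - y‖ ^ 2) + ENNReal.ofReal α * R u

theorem ENNReal.le_liminf_add {u v : ℕ → ℝ≥0∞} :
    atTop.liminf u + atTop.liminf v ≤ atTop.liminf (u + v) := by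
  simp only [liminf_eq_iSup_iInf_of_nat]
  exact ENNReal.iSup_add_iSup_le fun m n => le_iSup_of_le (max m n) <| le_iInf₂ fun i hi =>
    add_le_add (iInf₂_le i (le_of_max_le_left hi)) (iInf₂_le i (le_of_max_le_right hi))

section WeakConvergence

variable {U V : Type*} [NormedAddCommGroup U] [InnerProductSpace ℝ U]
  [NormedAddCommGroup V] [InnerProductSpace ℝ V] {u : ℕ → U} {x : U}

namespace WeakConv

theorem tendsto_apply [CompleteSpace U] (h : WeakConv u x) (f : StrongDual ℝ U) :
    Tendsto (fun k => f (u k)) atTop (𝓝 (f x)) := by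
  simpa only [real_inner_comm ((InnerProductSpace.toDual ℝ U).symm f),
    InnerProductSpace.toDual_symm_apply] using h ((InnerProductSpace.toDual ℝ U).symm f)

theorem map [CompleteSpace U] (h : WeakConv u x) (F : U →L[ℝ] V) : WeakConv (F ∘ u) (F x) :=
  fun w => h.tendsto_apply ((innerSL ℝ w).comp F)

theorem sub_const (h : WeakConv u x) (y : U) : WeakConv (fun k => u k - y) (x - y) := by
  intro w
  simpa only [inner_sub_right] using (h w).sub_const (inner ℝ w y)

theorem ofReal_half_sq_norm_le_liminf (h : WeakConv u x) :
    ENNReal.ofReal (2⁻¹ * ‖x‖ ^ 2) ≤ atTop.liminf (fun k => ENNReal.ofReal (2⁻¹ * ‖u k‖ ^ 2)) := by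
  -- `⟪x, v⟫ - ‖x‖² / 2 ≤ ‖v‖² / 2`, and the left side tends to `‖x‖² / 2` along `u`.
  have hlim : Tendsto (fun k => ENNReal.ofReal (inner ℝ x (u k) - 2⁻¹ * ‖x‖ ^ 2)) atTop
      (𝓝 (ENNReal.ofReal (2⁻¹ * ‖x‖ ^ 2))) := by
    have := ENNReal.tendsto_ofReal ((h x).sub_const (2⁻¹ * ‖x‖ ^ 2))
    rwa [real_inner_self_eq_norm_sq, show ‖x‖ ^ 2 - 2⁻¹ * ‖x‖ ^ 2 = 2⁻¹ * ‖x‖ ^ 2 by ring] at this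
  rw [← hlim.liminf_eq]
  refine liminf_le_liminf (Eventually.of_forall fun k => ENNReal.ofReal_le_ofReal ?_)
  nlinarith [real_inner_le_norm x (u k), sq_nonneg (‖x‖ - ‖u k‖)]

end WeakConv

theorem exists_subseq_weakConv_of_separable [CompleteSpace U]
    [TopologicalSpace.SeparableSpace U] {B : ℝ} (hB : ∀ k, ‖u k‖ ≤ B) :
    ∃ φ : ℕ → ℕ, StrictMono φ ∧ ∃ x : U, WeakConv (u ∘ φ) x := by
  set v : ℕ → WeakDual ℝ U := fun k => StrongDual.toWeakDual (InnerProductSpace.toDual ℝ U (u k))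
  have hv : ∀ k, v k ∈ WeakDual.toStrongDual ⁻¹' Metric.closedBall 0 B := fun k => by
    simpa [v] using hB k
  obtain ⟨a, -, φ, hφ, hlim⟩ := WeakDual.isSeqCompact_closedBall ℝ U 0 B hv
  refine ⟨φ, hφ, (InnerProductSpace.toDual ℝ U).symm (WeakDual.toStrongDual a), fun w => ?_⟩
  rw [real_inner_comm, InnerProductSpace.toDual_symm_apply]
  simpa [v, Function.comp_def, real_inner_comm w] using
    ((WeakDual.eval_continuous w).tendsto a).comp hlim

theorem exists_subseq_weakConv_of_bounded [CompleteSpace U] {B : ℝ} (hB : ∀ k, ‖u k‖ ≤ B) :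
    ∃ φ : ℕ → ℕ, StrictMono φ ∧ ∃ x : U, WeakConv (u ∘ φ) x := by
  -- Pass to the closed span `K` of the sequence, which is separable; pairings with `w` only see
  -- its projection onto `K`.
  set K := (Submodule.span ℝ (Set.range u)).topologicalClosure
  have : TopologicalSpace.SeparableSpace K := by
    have := (TopologicalSpace.IsSeparable.span (R := ℝ) (Set.countable_range u).isSeparable).closure
    rw [← Submodule.topologicalClosure_coe] at this
    exact this.separableSpace
  have : CompleteSpace K := (Submodule.isClosed_topologicalClosure _).completeSpace_coe
  have hmem : ∀ k, u k ∈ K := fun k =>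
    Submodule.le_topologicalClosure _ (Submodule.subset_span ⟨k, rfl⟩)
  obtain ⟨φ, hφ, x, hx⟩ :=
    exists_subseq_weakConv_of_separable (u := fun k => (⟨u k, hmem k⟩ : K)) hB
  refine ⟨φ, hφ, x, fun w => ?_⟩
  simpa only [K.inner_orthogonalProjectionOnto_eq_of_mem_right, Function.comp_def] using
    hx (K.orthogonalProjectionOnto w)

end WeakConvergence

section Tikhonov

variable {U V : Type*} [NormedAddCommGroup U] [InnerProductSpace ℝ U]
  [NormedAddCommGroup V] [InnerProductSpace ℝ V] (F : U →L[ℝ] V) (R : U → ℝ≥0∞) (α : ℝ)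

theorem tik_le_tik_add (y y' : V) (u : U) :
    Tik F R α y' u ≤
      Tik F R α y u + ENNReal.ofReal (‖F u - y‖ * ‖y' - y‖ + 2⁻¹ * ‖y' - y‖ ^ 2) := by
  have htri : ‖F u - y'‖ ≤ ‖F u - y‖ + ‖y' - y‖ := by
    simpa only [norm_sub_rev y] using norm_sub_le_norm_sub_add_norm_sub (F u) y y'
  have hsq : 2⁻¹ * ‖F u - y'‖ ^ 2 ≤
      2⁻¹ * ‖F u - y‖ ^ 2 + (‖F u - y‖ * ‖y' - y‖ + 2⁻¹ * ‖y' - y‖ ^ 2) := by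
    nlinarith [norm_nonneg (F u - y')]
  unfold Tik
  rw [add_right_comm, ← ENNReal.ofReal_add (by positivity) (by positivity)]
  gcongr

theorem tendsto_tik_of_tendsto {ySeq : ℕ → V} {y : V} (hy : Tendsto ySeq atTop (𝓝 y)) (w : U) :
    Tendsto (fun k => Tik F R α (ySeq k) w) atTop (𝓝 (Tik F R α y w)) := by
  have : Continuous fun z : V => ENNReal.ofReal (2⁻¹ * ‖F w - z‖ ^ 2) :=
    ENNReal.continuous_ofReal.comp (by fun_prop)
  exact ((this.tendsto y).comp hy).add_const _

theorem tik_le_liminf_of_weakConv [CompleteSpace U] (y : V) {v : ℕ → U} {x : U}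
    (hv : WeakConv v x) (hR : R x ≤ atTop.liminf (fun k => R (v k))) :
    Tik F R α y x ≤ atTop.liminf (fun k => Tik F R α y (v k)) := by
  have hfit := ((hv.map F).sub_const y).ofReal_half_sq_norm_le_liminf
  have hreg : ENNReal.ofReal α * R x ≤ atTop.liminf (fun k => ENNReal.ofReal α * R (v k)) := by
    rw [ENNReal.liminf_const_mul_of_ne_top ENNReal.ofReal_ne_top]
    gcongr
  exact (add_le_add hfit hreg).trans ENNReal.le_liminf_add

end Tikhonov

theorem exists_norm_le_of_isBounded_sublevel {U : Type*} [NormedAddCommGroup U] {f : U → ℝ≥0∞}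
    (hf : ∀ C : ℝ, 0 < C → Bornology.IsBounded {u : U | f u ≤ ENNReal.ofReal C})
    {u : ℕ → U} {c : ℝ≥0∞} (hc : c ≠ ⊤) (hu : ∀ k, f (u k) ≤ c) : ∃ B, ∀ k, ‖u k‖ ≤ B := by
  obtain ⟨B, hB⟩ := isBounded_iff_forall_norm_le.1 (hf (c.toReal + 1) (by positivity))
  refine ⟨B, fun k => hB _ ((hu k).trans ?_)⟩
  calc c = ENNReal.ofReal c.toReal := (ENNReal.ofReal_toReal hc).symm
    _ ≤ ENNReal.ofReal (c.toReal + 1) := ENNReal.ofReal_le_ofReal (by linarith)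

section Minimizers

variable {U V : Type*} [NormedAddCommGroup U] [InnerProductSpace ℝ U]
  [NormedAddCommGroup V] [InnerProductSpace ℝ V] {F : U →L[ℝ] V} {R : U → ℝ≥0∞} {α : ℝ}
  {y : V} {ySeq : ℕ → V} {u : ℕ → U}

theorem norm_sub_le_sqrt_of_tik_le {v : U} {C : ℝ} (h : Tik F R α y v ≤ ENNReal.ofReal C) :
    ‖F v - y‖ ≤ √(2 * C) := by
  have hfit : ENNReal.ofReal (2⁻¹ * ‖F v - y‖ ^ 2) ≤ ENNReal.ofReal C := le_self_add.trans h
  rcases ENNReal.ofReal_le_ofReal_iff'.1 hfit with hle | hle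
  · exact Real.le_sqrt_of_sq_le (by linarith)
  · exact (show ‖F v - y‖ ≤ 0 by nlinarith [norm_nonneg (F v - y)]).trans (Real.sqrt_nonneg _)

theorem exists_forall_tik_le_of_minimizers (hproper : ∃ u₀ : U, R u₀ ≠ ⊤)
    (hy : Tendsto ySeq atTop (𝓝 y))
    (hmin : ∀ k : ℕ, ∀ w : U, Tik F R α (ySeq k) (u k) ≤ Tik F R α (ySeq k) w) :
    ∃ C : ℝ, ∀ k, Tik F R α (ySeq k) (u k) ≤ ENNReal.ofReal C := by
  obtain ⟨u₀, hu₀⟩ := hproper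
  have hfin : ∀ z : V, Tik F R α z u₀ ≠ ⊤ := fun z =>
    ENNReal.add_ne_top.2 ⟨ENNReal.ofReal_ne_top, ENNReal.mul_ne_top ENNReal.ofReal_ne_top hu₀⟩
  obtain ⟨C, hC⟩ :=
    ((ENNReal.tendsto_toReal (hfin y)).comp (tendsto_tik_of_tendsto F R α hy u₀)).bddAbove_range
  refine ⟨C, fun k => (hmin k u₀).trans ?_⟩
  rw [← ENNReal.ofReal_toReal (hfin (ySeq k))]
  exact ENNReal.ofReal_le_ofReal (hC ⟨k, rfl⟩)

theorem exists_tik_le_tik_add_of_minimizers (hproper : ∃ u₀ : U, R u₀ ≠ ⊤)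
    (hy : Tendsto ySeq atTop (𝓝 y))
    (hmin : ∀ k : ℕ, ∀ w : U, Tik F R α (ySeq k) (u k) ≤ Tik F R α (ySeq k) w) :
    ∃ e : ℕ → ℝ, Tendsto e atTop (𝓝 0) ∧
      ∀ k, Tik F R α y (u k) ≤ Tik F R α (ySeq k) (u k) + ENNReal.ofReal (e k) := by
  obtain ⟨C, hC⟩ := exists_forall_tik_le_of_minimizers hproper hy hmin
  have hδ : Tendsto (fun k => ‖y - ySeq k‖) atTop (𝓝 0) := by
    simpa only [norm_sub_rev y] using tendsto_iff_norm_sub_tendsto_zero.1 hy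
  refine ⟨fun k => √(2 * C) * ‖y - ySeq k‖ + 2⁻¹ * ‖y - ySeq k‖ ^ 2, ?_, fun k => ?_⟩
  · simpa using (hδ.const_mul √(2 * C)).add ((hδ.pow 2).const_mul 2⁻¹)
  · refine (tik_le_tik_add F R α (ySeq k) y (u k)).trans ?_
    dsimp only
    gcongr
    exact norm_sub_le_sqrt_of_tik_le (hC k)

theorem exists_norm_le_of_minimizers (hproper : ∃ u₀ : U, R u₀ ≠ ⊤)
    (hbdd : ∀ C : ℝ, 0 < C → Bornology.IsBounded {v : U | Tik F R α y v ≤ ENNReal.ofReal C})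
    (hy : Tendsto ySeq atTop (𝓝 y))
    (hmin : ∀ k : ℕ, ∀ w : U, Tik F R α (ySeq k) (u k) ≤ Tik F R α (ySeq k) w) :
    ∃ B, ∀ k, ‖u k‖ ≤ B := by
  obtain ⟨C, hC⟩ := exists_forall_tik_le_of_minimizers hproper hy hmin
  obtain ⟨e, he, hle⟩ := exists_tik_le_tik_add_of_minimizers hproper hy hmin
  obtain ⟨E, hE⟩ := he.bddAbove_range
  refine exists_norm_le_of_isBounded_sublevel hbdd (c := ENNReal.ofReal C + ENNReal.ofReal E)
    (ENNReal.add_ne_top.2 ⟨ENNReal.ofReal_ne_top, ENNReal.ofReal_ne_top⟩) fun k => ?_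
  exact (hle k).trans (add_le_add (hC k) (ENNReal.ofReal_le_ofReal (hE ⟨k, rfl⟩)))

theorem tik_le_of_weakConv_of_minimizers [CompleteSpace U] (hproper : ∃ u₀ : U, R u₀ ≠ ⊤)
    (hy : Tendsto ySeq atTop (𝓝 y))
    (hmin : ∀ k : ℕ, ∀ w : U, Tik F R α (ySeq k) (u k) ≤ Tik F R α (ySeq k) w)
    {φ : ℕ → ℕ} (hφ : StrictMono φ) {x : U} (hx : WeakConv (u ∘ φ) x)
    (hR : R x ≤ atTop.liminf (fun k => R (u (φ k)))) (w : U) :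
    Tik F R α y x ≤ Tik F R α y w := by
  obtain ⟨e, he, hle⟩ := exists_tik_le_tik_add_of_minimizers hproper hy hmin
  have hlim : Tendsto (fun k => Tik F R α (ySeq (φ k)) w + ENNReal.ofReal (e (φ k))) atTop
      (𝓝 (Tik F R α y w)) := by
    simpa [Function.comp_def] using ((tendsto_tik_of_tendsto F R α hy w).add
      (ENNReal.tendsto_ofReal he)).comp hφ.tendsto_atTop
  calc Tik F R α y x ≤ atTop.liminf (fun k => Tik F R α y (u (φ k))) :=
        tik_le_liminf_of_weakConv F R α y hx hR
    _ ≤ atTop.liminf (fun k => Tik F R α (ySeq (φ k)) w + ENNReal.ofReal (e (φ k))) :=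
        liminf_le_liminf (Eventually.of_forall fun k =>
          (hle (φ k)).trans (add_le_add (hmin (φ k) w) le_rfl))
    _ = Tik F R α y w := hlim.liminf_eq

end Minimizers

theorem tikhonov_stability_general
    {U V : Type*} [NormedAddCommGroup U] [InnerProductSpace ℝ U] [CompleteSpace U]
    [NormedAddCommGroup V] [InnerProductSpace ℝ V]
    (F : U →L[ℝ] V) (R : U → ℝ≥0∞)
    (hproper : ∃ u : U, R u ≠ ⊤)
    (hlsc : ∀ (u : ℕ → U) (x : U), WeakConv u x →
      R x ≤ atTop.liminf (fun k => R (u k)))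
    (hbdd : ∀ α : ℝ, 0 < α → ∀ y : V, ∀ C : ℝ, 0 < C →
      Bornology.IsBounded {u : U | Tik F R α y u ≤ ENNReal.ofReal C})
    (α : ℝ) (hα : 0 < α) (y : V)
    (ySeq : ℕ → V) (hy : Tendsto ySeq atTop (nhds y))
    (u : ℕ → U)
    (hmin : ∀ k : ℕ, ∀ w : U, Tik F R α (ySeq k) (u k) ≤ Tik F R α (ySeq k) w) :
    (∃ φ : ℕ → ℕ, StrictMono φ ∧ ∃ x : U, WeakConv (u ∘ φ) x) ∧
    (∀ x : U, (∃ φ : ℕ → ℕ, StrictMono φ ∧ WeakConv (u ∘ φ) x) →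
      ∀ w : U, Tik F R α y x ≤ Tik F R α y w) := by
  refine ⟨?_, fun x ⟨φ, hφ, hx⟩ =>
    tik_le_of_weakConv_of_minimizers hproper hy hmin hφ hx (hlsc _ x hx)⟩
  obtain ⟨B, hB⟩ := exists_norm_le_of_minimizers hproper (hbdd α hα y) hy hmin
  exact exists_subseq_weakConv_of_bounded hB

/-- Fix `α > 0` and `y ∈ V`. For every sequence `(y_k)` converging in norm
to `y` and every sequence `(u_k)` of minimizers of `T_{α,y_k}`, the sequence `(u_k)` has
a weakly convergent subsequence, and every weak limit point of `(u_k)` is a minimizer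
of `T_{α,y}`. -/
theorem tikhonov_stability
    {U V : Type*} [NormedAddCommGroup U] [InnerProductSpace ℝ U] [CompleteSpace U]
    [NormedAddCommGroup V] [InnerProductSpace ℝ V] [CompleteSpace V]
    (F : U →L[ℝ] V) (R : U → ℝ≥0∞)
    (hproper : ∃ u : U, R u ≠ ⊤)
    (hconvex : ∀ u v : U, ∀ t : ℝ, 0 ≤ t → t ≤ 1 →
      R (t • u + (1 - t) • v) ≤ ENNReal.ofReal t * R u + ENNReal.ofReal (1 - t) * R v)
    (hlsc : ∀ (u : ℕ → U) (x : U), WeakConv u x →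
      R x ≤ atTop.liminf (fun k => R (u k)))
    (hbdd : ∀ α : ℝ, 0 < α → ∀ y : V, ∀ C : ℝ, 0 < C →
      Bornology.IsBounded {u : U | Tik F R α y u ≤ ENNReal.ofReal C})
    (α : ℝ) (hα : 0 < α) (y : V)
    (ySeq : ℕ → V) (hy : Tendsto ySeq atTop (nhds y))
    (u : ℕ → U)
    (hmin : ∀ k : ℕ, ∀ w : U, Tik F R α (ySeq k) (u k) ≤ Tik F R α (ySeq k) w) :
    (∃ φ : ℕ → ℕ, StrictMono φ ∧ ∃ x : U, WeakConv (u ∘ φ) x) ∧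
    (∀ x : U, (∃ φ : ℕ → ℕ, StrictMono φ ∧ WeakConv (u ∘ φ) x) →
      ∀ w : U, Tik F R α y x ≤ Tik F R α y w) :=
  tikhonov_stability_general F R hproper hlsc hbdd α hα y ySeq hy u hmin
end

section
/- Assume the equation F u = y has a solution u⁰ ∈ U with R(u⁰) < ∞. Let α : (0,∞) → (0,∞) satisfy α(δ) → 0 and δ²/α(δ) → 0 as δ → 0. Let (δ_k) be a sequence of positive numbers converging to 0, let (y_k) in V satisfy ‖y − y_k‖ ≤ δ_k, and let u_k be a minimizer of T_{α(δ_k), y_k} for each k. Then (u_k) has a weakly convergent subsequence, and every weak limit point u of (u_k) satisfies F u = y. -/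
/-!
Comparing the minimiser `u_k` with the exact solution `u⁰` gives
`T_{α_k,y_k}(u_k) ≤ δ_k²/2 + α_k R(u⁰)`. Hence the residual satisfies
`‖F u_k − y_k‖² ≤ δ_k² + 2 α_k R(u⁰) → 0`, so `F u_k → y` in norm, while
`R(u_k) ≤ δ_k²/(2 α_k) + R(u⁰)` stays bounded. Thus `(u_k)` eventually lies in a sublevel set of
`T_{1,y}`, which is bounded, and a bounded sequence in a Hilbert space has a weakly convergent
subsequence. Since `F` is weakly sequentially continuous, every weak limit point `x` has `F x`
as the weak limit of a norm-convergent subsequence of `F u_k`, whence `F x = y`.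
-/

open Filter Topology ENNReal

theorem Bornology.IsBounded.range_of_eventually_mem {X : Type*} [PseudoMetricSpace X]
    {u : ℕ → X} {S : Set X} (hS : Bornology.IsBounded S) (h : ∀ᶠ k in atTop, u k ∈ S) :
    Bornology.IsBounded (Set.range u) := by
  obtain ⟨N, hN⟩ := eventually_atTop.mp h
  refine (((Set.finite_Iio N).image u).isBounded.union hS).subset ?_
  rintro _ ⟨k, rfl⟩
  rcases lt_or_ge k N with hk | hk
  exacts [Or.inl ⟨k, hk, rfl⟩, Or.inr (hN k hk)]

section WeakConv

variable {U V : Type*} [NormedAddCommGroup U] [InnerProductSpace ℝ U]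
  [NormedAddCommGroup V] [InnerProductSpace ℝ V]

theorem WeakConv.eq_of_tendsto {v : ℕ → V} {x y : V} (hw : WeakConv v x)
    (hs : Tendsto v atTop (𝓝 y)) : x = y :=
  ext_inner_left ℝ fun w => tendsto_nhds_unique (hw w) (tendsto_const_nhds.inner hs)

theorem WeakConv.map_s2 [CompleteSpace U] {u : ℕ → U} {x : U} (h : WeakConv u x) (F : U →L[ℝ] V) :
    WeakConv (fun k => F (u k)) (F x) := fun w => by
  simpa only [InnerProductSpace.toDual_symm_apply, ContinuousLinearMap.comp_apply,
    innerSL_apply_apply] using h ((InnerProductSpace.toDual ℝ U).symm ((innerSL ℝ w).comp F))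

open TopologicalSpace InnerProductSpace in
theorem exists_weakConv_subseq_of_norm_le [CompleteSpace U] {u : ℕ → U} {B : ℝ}
    (hB : ∀ k, ‖u k‖ ≤ B) :
    ∃ φ : ℕ → ℕ, StrictMono φ ∧ ∃ x : U, WeakConv (u ∘ φ) x := by
  -- Sequential Banach–Alaoglu applies in the separable closed span `M` of the sequence; a test
  -- vector only sees the sequence through its orthogonal projection onto `M`.
  set M := (Submodule.span ℝ (Set.range u)).topologicalClosure
  have hu : ∀ k, u k ∈ M := fun k =>
    Submodule.le_topologicalClosure _ (Submodule.subset_span ⟨k, rfl⟩)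
  have : SeparableSpace M := by
    have := (Set.countable_range u).isSeparable.span (R := ℝ) |>.closure
    rw [← Submodule.topologicalClosure_coe] at this
    exact this.separableSpace
  have inner_eq (h : StrongDual ℝ M) (w : U) :
      inner ℝ w ((toDual ℝ M).symm h : U) = h (M.orthogonalProjectionOnto w) := by
    rw [← toDual_symm_apply, Submodule.inner_orthogonalProjectionOnto_eq_of_mem_left,
      real_inner_comm]
  let f : ℕ → StrongDual ℝ M := fun k => toDual ℝ M ⟨u k, hu k⟩
  have hf : ∀ k, (f k).toWeakDual ∈ WeakDual.toStrongDual ⁻¹' Metric.closedBall 0 B := fun k => by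
    rw [Set.mem_preimage, StrongDual.toStrongDual_toWeakDual]
    exact mem_closedBall_zero_iff.mpr (((toDual ℝ M).norm_map _).trans_le (hB k))
  obtain ⟨g, -, φ, hφ, hlim⟩ := WeakDual.isSeqCompact_closedBall ℝ M 0 B hf
  refine ⟨φ, hφ, (toDual ℝ M).symm g.toStrongDual, fun w => ?_⟩
  have := ((WeakDual.eval_continuous (M.orthogonalProjectionOnto w)).tendsto g).comp hlim
  rw [inner_eq]
  convert this using 2 with k
  · simpa [f] using inner_eq (f (φ k)) w
  · rfl

end WeakConv

section Tikhonov

variable {U V : Type*} [NormedAddCommGroup U] [InnerProductSpace ℝ U]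
  [NormedAddCommGroup V] [InnerProductSpace ℝ V] {F : U →L[ℝ] V} {R : U → ℝ≥0∞}

theorem tik_le_ofReal_of_le {α a b : ℝ} {y : V} {u : U} (hα : 0 ≤ α) (hb : 0 ≤ b)
    (hres : ‖F u - y‖ ≤ a) (hR : R u ≤ ENNReal.ofReal b) :
    Tik F R α y u ≤ ENNReal.ofReal (2⁻¹ * a ^ 2 + α * b) := by
  rw [Tik, ENNReal.ofReal_add (by positivity) (mul_nonneg hα hb), ENNReal.ofReal_mul hα]
  gcongr

theorem norm_sub_sq_le_of_tik_le {α c : ℝ} {y : V} {u : U} (hc : 0 ≤ c)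
    (h : Tik F R α y u ≤ ENNReal.ofReal c) : 2⁻¹ * ‖F u - y‖ ^ 2 ≤ c :=
  (ENNReal.ofReal_le_ofReal_iff hc).mp (le_self_add.trans h)

theorem le_ofReal_div_of_tik_le {α c : ℝ} {y : V} {u : U} (hα : 0 < α)
    (h : Tik F R α y u ≤ ENNReal.ofReal c) : R u ≤ ENNReal.ofReal (c / α) := by
  rw [ENNReal.ofReal_div_of_pos hα, ENNReal.le_div_iff_mul_le (Or.inl (by simpa using hα))
    (Or.inl ENNReal.ofReal_ne_top), mul_comm]
  exact le_add_self.trans h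

theorem tik_le_of_isMinOn {α δ : ℝ} {y yδ : V} {u u0 : U} (hα : 0 ≤ α)
    (hmin : IsMinOn (Tik F R α yδ) Set.univ u) (hsol : F u0 = y) (hfin : R u0 ≠ ⊤)
    (hy : ‖y - yδ‖ ≤ δ) : Tik F R α yδ u ≤ ENNReal.ofReal (2⁻¹ * δ ^ 2 + α * (R u0).toReal) :=
  (isMinOn_univ_iff.mp hmin u0).trans <| tik_le_ofReal_of_le hα ENNReal.toReal_nonneg
    (by rwa [hsol]) (ENNReal.ofReal_toReal hfin).ge

variable {u : ℕ → U} {a δ : ℕ → ℝ} {y : V} {ys : ℕ → V} {r : ℝ}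

theorem tendsto_apply_of_tik_le
    (hT : ∀ k, Tik F R (a k) (ys k) (u k) ≤ ENNReal.ofReal (2⁻¹ * δ k ^ 2 + a k * r))
    (ha : ∀ k, 0 ≤ a k) (hr : 0 ≤ r) (ha0 : Tendsto a atTop (𝓝 0))
    (hδ0 : Tendsto δ atTop (𝓝 0)) (hy : ∀ k, ‖y - ys k‖ ≤ δ k) :
    Tendsto (fun k => F (u k)) atTop (𝓝 y) := by
  have hres k : ‖F (u k) - ys k‖ ≤ √(δ k ^ 2 + 2 * (a k * r)) := by
    refine (abs_norm _).symm.trans_le (Real.abs_le_sqrt ?_)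
    linarith [norm_sub_sq_le_of_tik_le (by have := ha k; positivity) (hT k)]
  have hbound : Tendsto (fun k => √(δ k ^ 2 + 2 * (a k * r)) + δ k) atTop (𝓝 0) := by
    simpa using (((hδ0.pow 2).add ((ha0.mul_const r).const_mul 2)).sqrt).add hδ0
  refine tendsto_iff_norm_sub_tendsto_zero.mpr (squeeze_zero (fun _ => norm_nonneg _)
    (fun k => ?_) hbound)
  exact (norm_sub_le_norm_sub_add_norm_sub _ (ys k) _).trans
    (add_le_add (hres k) ((norm_sub_rev _ _).trans_le (hy k)))

theorem eventually_le_ofReal_of_tik_le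
    (hT : ∀ k, Tik F R (a k) (ys k) (u k) ≤ ENNReal.ofReal (2⁻¹ * δ k ^ 2 + a k * r))
    (ha : ∀ k, 0 < a k) (hratio : Tendsto (fun k => δ k ^ 2 / a k) atTop (𝓝 0)) {s : ℝ}
    (hs : r < s) : ∀ᶠ k in atTop, R (u k) ≤ ENNReal.ofReal s := by
  have hlim : Tendsto (fun k => (2⁻¹ * δ k ^ 2 + a k * r) / a k) atTop (𝓝 r) := by
    have : Tendsto (fun k => 2⁻¹ * (δ k ^ 2 / a k) + r) atTop (𝓝 r) := by
      simpa using (hratio.const_mul 2⁻¹).add_const r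
    refine this.congr fun k => ?_
    field_simp [(ha k).ne']
  filter_upwards [hlim.eventually_le_const hs] with k hk
  exact (le_ofReal_div_of_tik_le (ha k) (hT k)).trans (ENNReal.ofReal_le_ofReal hk)

end Tikhonov

theorem tikhonov_convergence_general
    {U V : Type*} [NormedAddCommGroup U] [InnerProductSpace ℝ U] [CompleteSpace U]
    [NormedAddCommGroup V] [InnerProductSpace ℝ V]
    (F : U →L[ℝ] V) (R : U → ℝ≥0∞)
    (hbdd : ∀ α : ℝ, 0 < α → ∀ y : V, ∀ C : ℝ, 0 < C →
      Bornology.IsBounded {u : U | Tik F R α y u ≤ ENNReal.ofReal C})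
    (y : V) (u0 : U) (hsol : F u0 = y) (hfin : R u0 ≠ ⊤)
    (α : ℝ → ℝ) (hαpos : ∀ δ : ℝ, 0 < δ → 0 < α δ)
    (hα0 : Tendsto α (nhdsWithin 0 (Set.Ioi 0)) (nhds 0))
    (hδ2α : Tendsto (fun δ : ℝ => δ ^ 2 / α δ) (nhdsWithin 0 (Set.Ioi 0)) (nhds 0))
    (δSeq : ℕ → ℝ) (hδpos : ∀ k, 0 < δSeq k) (hδ0 : Tendsto δSeq atTop (nhds 0))
    (ySeq : ℕ → V) (hy : ∀ k, ‖y - ySeq k‖ ≤ δSeq k)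
    (u : ℕ → U)
    (hmin : ∀ k : ℕ, ∀ w : U,
      Tik F R (α (δSeq k)) (ySeq k) (u k) ≤ Tik F R (α (δSeq k)) (ySeq k) w) :
    (∃ φ : ℕ → ℕ, StrictMono φ ∧ ∃ x : U, WeakConv (u ∘ φ) x) ∧
    (∀ x : U, (∃ φ : ℕ → ℕ, StrictMono φ ∧ WeakConv (u ∘ φ) x) → F x = y) := by
  set r := (R u0).toReal
  have hαk k : 0 < α (δSeq k) := hαpos _ (hδpos k)
  have hδ : Tendsto δSeq atTop (𝓝[>] 0) :=
    tendsto_nhdsWithin_of_tendsto_nhds_of_eventually_within _ hδ0 (.of_forall hδpos)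
  have hT k := tik_le_of_isMinOn (hαk k).le (isMinOn_univ_iff.mpr (hmin k)) hsol hfin (hy k)
  have hFu : Tendsto (fun k => F (u k)) atTop (𝓝 y) :=
    tendsto_apply_of_tik_le hT (fun k => (hαk k).le) ENNReal.toReal_nonneg (hα0.comp hδ) hδ0 hy
  have hR := eventually_le_ofReal_of_tik_le hT hαk (hδ2α.comp hδ) (lt_add_one r)
  have hres := (tendsto_iff_norm_sub_tendsto_zero.mp hFu).eventually_le_const one_pos
  have hbounded : Bornology.IsBounded (Set.range u) :=
    (hbdd 1 one_pos y (2⁻¹ * 1 ^ 2 + 1 * (r + 1)) (by positivity)).range_of_eventually_mem <| by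
      filter_upwards [hres, hR] with k hk hRk
      exact tik_le_ofReal_of_le zero_le_one (by positivity) hk hRk
  obtain ⟨B, hB⟩ := hbounded.exists_norm_le
  refine ⟨exists_weakConv_subseq_of_norm_le fun k => hB _ ⟨k, rfl⟩, ?_⟩
  rintro x ⟨φ, hφ, hx⟩
  exact (hx.map_s2 F).eq_of_tendsto (hFu.comp hφ.tendsto_atTop)

/-- If `F u = y` has a solution with finite `R`, the parameter choice
`α(δ)` satisfies `α(δ) → 0` and `δ²/α(δ) → 0` as `δ → 0`, `(δ_k)` are positive noise
levels tending to `0`, `‖y − y_k‖ ≤ δ_k`, and `u_k` minimizes `T_{α(δ_k),y_k}`, then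
`(u_k)` has a weakly convergent subsequence and every weak limit point `u` of `(u_k)`
satisfies `F u = y`. -/
theorem tikhonov_convergence
    {U V : Type*} [NormedAddCommGroup U] [InnerProductSpace ℝ U] [CompleteSpace U]
    [NormedAddCommGroup V] [InnerProductSpace ℝ V] [CompleteSpace V]
    (F : U →L[ℝ] V) (R : U → ℝ≥0∞)
    (hproper : ∃ u : U, R u ≠ ⊤)
    (hconvex : ∀ u v : U, ∀ t : ℝ, 0 ≤ t → t ≤ 1 →
      R (t • u + (1 - t) • v) ≤ ENNReal.ofReal t * R u + ENNReal.ofReal (1 - t) * R v)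
    (hlsc : ∀ (u : ℕ → U) (x : U), WeakConv u x →
      R x ≤ atTop.liminf (fun k => R (u k)))
    (hbdd : ∀ α : ℝ, 0 < α → ∀ y : V, ∀ C : ℝ, 0 < C →
      Bornology.IsBounded {u : U | Tik F R α y u ≤ ENNReal.ofReal C})
    (y : V) (u0 : U) (hsol : F u0 = y) (hfin : R u0 ≠ ⊤)
    (α : ℝ → ℝ) (hαpos : ∀ δ : ℝ, 0 < δ → 0 < α δ)
    (hα0 : Tendsto α (nhdsWithin 0 (Set.Ioi 0)) (nhds 0))
    (hδ2α : Tendsto (fun δ : ℝ => δ ^ 2 / α δ) (nhdsWithin 0 (Set.Ioi 0)) (nhds 0))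
    (δSeq : ℕ → ℝ) (hδpos : ∀ k, 0 < δSeq k) (hδ0 : Tendsto δSeq atTop (nhds 0))
    (ySeq : ℕ → V) (hy : ∀ k, ‖y - ySeq k‖ ≤ δSeq k)
    (u : ℕ → U)
    (hmin : ∀ k : ℕ, ∀ w : U,
      Tik F R (α (δSeq k)) (ySeq k) (u k) ≤ Tik F R (α (δSeq k)) (ySeq k) w) :
    (∃ φ : ℕ → ℕ, StrictMono φ ∧ ∃ x : U, WeakConv (u ∘ φ) x) ∧
    (∀ x : U, (∃ φ : ℕ → ℕ, StrictMono φ ∧ WeakConv (u ∘ φ) x) → F x = y) :=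
  tikhonov_convergence_general F R hbdd y u0 hsol hfin α hαpos hα0 hδ2α δSeq hδpos hδ0 ySeq hy u
    hmin
end

section
/- Suppose u† ∈ U satisfies F u† = y and R(u†) < ∞, and the source condition holds: there exists ω ∈ V with ξ = F* ω and R(u) ≥ R(u†) + ⟨ξ, u − u†⟩ for all u ∈ U. Fix c > 0 and for each δ > 0 choose α = c·δ. Then there is a constant C > 0 such that for all δ > 0, all y^δ ∈ V with ‖y − y^δ‖ ≤ δ, and every minimizer u_α^δ of T_{α,y^δ} with R(u_α^δ) < ∞, the Bregman distance satisfies D_ξ(u_α^δ, u†) ≤ C·δ. -/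
open Filter Topology ENNReal

/-- The Bregman distance `D_ξ(ũ, u) = R(ũ) − R(u) − ⟨ξ, ũ − u⟩` (for `R` finite at
both points, expressed via `ENNReal.toReal`). -/
noncomputable def Breg {U : Type*} [NormedAddCommGroup U] [InnerProductSpace ℝ U]
    (R : U → ℝ≥0∞) (ξ : U) (utilde u : U) : ℝ :=
  (R utilde).toReal - (R u).toReal - (inner ℝ ξ (utilde - u) : ℝ)

/-!
Comparing the minimizer `u` of `T_{α,y^δ}` with `u†` gives
`α (R(u) − R(u†)) ≤ ½‖F u† − y^δ‖² − ½‖F u − y^δ‖²`. Since `ξ = F* ω`, the linear part of the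
Bregman distance is `−⟨ω, F u − F u†⟩ ≤ ‖ω‖ (‖F u − y^δ‖ + ‖F u† − y^δ‖)`, and the term
`‖ω‖ ‖F u − y^δ‖` is absorbed by the residual `‖F u − y^δ‖² / (2α)` at the cost of `α ‖ω‖² / 2`.
Altogether `D_ξ(u, u†) ≤ δ² / (2α) + ‖ω‖ δ + α ‖ω‖² / 2`, which is `O(δ)` for `α = c δ`.
-/

section Tikhonov

variable {U V : Type*} [NormedAddCommGroup U] [InnerProductSpace ℝ U]
  [NormedAddCommGroup V] [InnerProductSpace ℝ V]
  {F : U →L[ℝ] V} {R : U → ℝ≥0∞} {α : ℝ} {y : V} {u w : U}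

lemma Tik_ne_top (hw : R w ≠ ⊤) : Tik F R α y w ≠ ⊤ :=
  ENNReal.add_ne_top.2 ⟨ENNReal.ofReal_ne_top, ENNReal.mul_ne_top ENNReal.ofReal_ne_top hw⟩

lemma Tik_toReal (hα : 0 ≤ α) (hw : R w ≠ ⊤) :
    (Tik F R α y w).toReal = 2⁻¹ * ‖F w - y‖ ^ 2 + α * (R w).toReal := by
  rw [Tik, ENNReal.toReal_add ENNReal.ofReal_ne_top (ENNReal.mul_ne_top ENNReal.ofReal_ne_top hw),
    ENNReal.toReal_mul, ENNReal.toReal_ofReal (by positivity), ENNReal.toReal_ofReal hα]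

lemma Tik_toReal_le_of_le (hα : 0 ≤ α) (hu : R u ≠ ⊤) (hw : R w ≠ ⊤)
    (h : Tik F R α y u ≤ Tik F R α y w) :
    2⁻¹ * ‖F u - y‖ ^ 2 + α * (R u).toReal ≤ 2⁻¹ * ‖F w - y‖ ^ 2 + α * (R w).toReal := by
  rw [← Tik_toReal hα hu, ← Tik_toReal hα hw]
  exact ENNReal.toReal_mono (Tik_ne_top hw) h

variable [CompleteSpace U] [CompleteSpace V]

lemma neg_inner_adjoint_le (ω : V) (u w : U) (y : V) :
    -inner ℝ (ContinuousLinearMap.adjoint F ω) (u - w) ≤ ‖ω‖ * (‖F u - y‖ + ‖F w - y‖) := by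
  rw [ContinuousLinearMap.adjoint_inner_left, map_sub]
  calc -inner ℝ ω (F u - F w) ≤ ‖ω‖ * ‖F u - F w‖ :=
        (neg_le_abs _).trans (abs_real_inner_le_norm _ _)
    _ ≤ ‖ω‖ * (‖F u - y‖ + ‖F w - y‖) := by
        gcongr
        rw [← norm_sub_rev y (F w)]
        exact norm_sub_le_norm_sub_add_norm_sub _ _ _

theorem Breg_adjoint_le_of_isMinimizer (ω : V) {udag : U} (hα : 0 < α)
    (hmin : ∀ w, Tik F R α y u ≤ Tik F R α y w) (hu : R u ≠ ⊤) (hdag : R udag ≠ ⊤) :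
    Breg R (ContinuousLinearMap.adjoint F ω) u udag ≤
      ‖F udag - y‖ ^ 2 / (2 * α) + ‖ω‖ * ‖F udag - y‖ + α * ‖ω‖ ^ 2 / 2 := by
  set a := ‖F u - y‖
  set e := ‖F udag - y‖
  set b := ‖ω‖
  have hcompare := Tik_toReal_le_of_le hα.le hu hdag (hmin udag)
  have hreg : (R u).toReal - (R udag).toReal ≤ e ^ 2 / (2 * α) - a ^ 2 / (2 * α) := by
    rw [← sub_div, le_div_iff₀ (by positivity)]
    linarith
  -- Young's inequality, from `0 ≤ (a - α b)²`
  have hyoung : b * a ≤ a ^ 2 / (2 * α) + α * b ^ 2 / 2 := by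
    rw [div_add' _ _ _ (by positivity), le_div_iff₀ (by positivity)]
    nlinarith [sq_nonneg (a - α * b)]
  have hlin := neg_inner_adjoint_le (F := F) ω u udag y
  rw [Breg]
  linarith

end Tikhonov

theorem tikhonov_convergence_rate_bregman_general
    {U V : Type*} [NormedAddCommGroup U] [InnerProductSpace ℝ U] [CompleteSpace U]
    [NormedAddCommGroup V] [InnerProductSpace ℝ V] [CompleteSpace V]
    (F : U →L[ℝ] V) (R : U → ℝ≥0∞)
    (y : V) (udag : U) (hsol : F udag = y) (hfin : R udag ≠ ⊤)
    (ω : V) (ξ : U) (hξ : ξ = (ContinuousLinearMap.adjoint F) ω)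
    (c : ℝ) (hc : 0 < c) :
    ∃ C : ℝ, 0 < C ∧ ∀ δ : ℝ, 0 < δ → ∀ yδ : V, ‖y - yδ‖ ≤ δ →
      ∀ uαδ : U, (∀ w : U, Tik F R (c * δ) yδ uαδ ≤ Tik F R (c * δ) yδ w) →
        R uαδ ≠ ⊤ → Breg R ξ uαδ udag ≤ C * δ := by
  refine ⟨(2 * c)⁻¹ + ‖ω‖ + c * ‖ω‖ ^ 2 / 2, by positivity, ?_⟩
  intro δ hδ yδ hnoise uαδ hmin hu
  subst hξ hsol
  calc Breg R (ContinuousLinearMap.adjoint F ω) uαδ udag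
      ≤ ‖F udag - yδ‖ ^ 2 / (2 * (c * δ)) + ‖ω‖ * ‖F udag - yδ‖ + c * δ * ‖ω‖ ^ 2 / 2 :=
        Breg_adjoint_le_of_isMinimizer ω (mul_pos hc hδ) hmin hu hfin
    _ ≤ δ ^ 2 / (2 * (c * δ)) + ‖ω‖ * δ + c * δ * ‖ω‖ ^ 2 / 2 := by gcongr
    _ = ((2 * c)⁻¹ + ‖ω‖ + c * ‖ω‖ ^ 2 / 2) * δ := by field_simp

/-- Under the source condition `ξ = F* ω ∈ ∂R(u†)` and the parameter
choice `α = c·δ`, the Bregman distance of any minimizer `u_α^δ` of `T_{α,y^δ}` (with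
`R(u_α^δ) < ∞`) to `u†` is bounded by `C·δ`. -/
theorem tikhonov_convergence_rate_bregman
    {U V : Type*} [NormedAddCommGroup U] [InnerProductSpace ℝ U] [CompleteSpace U]
    [NormedAddCommGroup V] [InnerProductSpace ℝ V] [CompleteSpace V]
    (F : U →L[ℝ] V) (R : U → ℝ≥0∞)
    (hproper : ∃ u : U, R u ≠ ⊤)
    (hconvex : ∀ u v : U, ∀ t : ℝ, 0 ≤ t → t ≤ 1 →
      R (t • u + (1 - t) • v) ≤ ENNReal.ofReal t * R u + ENNReal.ofReal (1 - t) * R v)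
    (y : V) (udag : U) (hsol : F udag = y) (hfin : R udag ≠ ⊤)
    (ω : V) (ξ : U) (hξ : ξ = (ContinuousLinearMap.adjoint F) ω)
    (hsource : ∀ u : U,
      ENNReal.ofReal ((R udag).toReal + (inner ℝ ξ (u - udag) : ℝ)) ≤ R u)
    (c : ℝ) (hc : 0 < c) :
    ∃ C : ℝ, 0 < C ∧ ∀ δ : ℝ, 0 < δ → ∀ yδ : V, ‖y - yδ‖ ≤ δ →
      ∀ uαδ : U, (∀ w : U, Tik F R (c * δ) yδ uαδ ≤ Tik F R (c * δ) yδ w) →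
        R uαδ ≠ ⊤ → Breg R ξ uαδ udag ≤ C * δ :=
  tikhonov_convergence_rate_bregman_general F R y udag hsol hfin ω ξ hξ c hc
end
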